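/- On a probability space, in the multilayer e-filter setting with null structure, fix original levels α₀^(1),…,α₀^(M) ∈ (0,1) and target levels α^(1),…,α^(M) ∈ (0,1). For each m ∈ [M], let R^(m) ⊆ [G^(m)] be a random rejection set and V̂^(m) a nonnegative random variable satisfying E[|R^(m) ∩ H0^(m)| / max(V̂^(m), α₀^(m))] ≤ 1. Define the generalized e-values e_g^(m) = G^(m)·1{g ∈ R^(m)}/max(V̂^(m), α₀^(m)), and let S be the output of the generalized e-filter applied to these e-values at levels α^(1),…,α^(M). Then FDR^(m) ≤ α^(m) for every m ∈ [M]. -/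

import Mathlib

open scoped ENNReal
open Filter MeasureTheory

namespace MultilayerEFilter

variable {N M : ℕ} {G : Fin M → ℕ}

/-- Candidate selection set `S(t) = {j : e_{h(m,j)}^(m) ≥ t^(m) for all m}`. -/
noncomputable def sel (h : (m : Fin M) → Fin N → Fin (G m))
    (e : (m : Fin M) → Fin (G m) → ℝ≥0∞) (t : Fin M → ℝ≥0∞) : Finset (Fin N) :=
  Finset.univ.filter fun j => ∀ m, t m ≤ e m (h m j)

/-- Induced group selection `S^(m) = {g : A_g^(m) ∩ S ≠ ∅}`. -/
noncomputable def selGrp (A : (m : Fin M) → Fin (G m) → Finset (Fin N))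
    (S : Finset (Fin N)) (m : Fin M) : Finset (Fin (G m)) :=
  Finset.univ.filter fun g => ∃ j ∈ A m g, j ∈ S

/-- Estimated FDP at layer `m`: `(G^(m)/t^(m)) / (|S^(m)(t)| ∨ 1)` (with `G/∞ = 0`). -/
noncomputable def FDPhat (A : (m : Fin M) → Fin (G m) → Finset (Fin N))
    (h : (m : Fin M) → Fin N → Fin (G m))
    (e : (m : Fin M) → Fin (G m) → ℝ≥0∞) (t : Fin M → ℝ≥0∞) (m : Fin M) : ℝ≥0∞ :=
  ((G m : ℝ≥0∞) / t m) / ((max (selGrp A (sel h e t) m).card 1 : ℕ) : ℝ≥0∞)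

/-- Admissible threshold vectors. -/
noncomputable def admissible (A : (m : Fin M) → Fin (G m) → Finset (Fin N))
    (h : (m : Fin M) → Fin N → Fin (G m))
    (e : (m : Fin M) → Fin (G m) → ℝ≥0∞) (α : Fin M → ℝ) : Set (Fin M → ℝ≥0∞) :=
  {t | (∀ m, 1 ≤ t m) ∧ ∀ m, FDPhat A h e t m ≤ ENNReal.ofReal (α m)}

/-- Threshold of the generalized e-filter: coordinatewise minimum over admissible vectors. -/
noncomputable def filterThreshold (A : (m : Fin M) → Fin (G m) → Finset (Fin N))
    (h : (m : Fin M) → Fin N → Fin (G m))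
    (e : (m : Fin M) → Fin (G m) → ℝ≥0∞) (α : Fin M → ℝ) (m : Fin M) : ℝ≥0∞ :=
  sInf {s | ∃ t ∈ admissible A h e α, t m = s}

/-- Output of the generalized e-filter. -/
noncomputable def output (A : (m : Fin M) → Fin (G m) → Finset (Fin N))
    (h : (m : Fin M) → Fin N → Fin (G m))
    (e : (m : Fin M) → Fin (G m) → ℝ≥0∞) (α : Fin M → ℝ) : Finset (Fin N) :=
  sel h e (filterThreshold A h e α)

/-- Null groups at layer `m`: groups entirely contained in the null feature set. -/
def nullGrp (A : (m : Fin M) → Fin (G m) → Finset (Fin N))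
    (H0 : Finset (Fin N)) (m : Fin M) : Finset (Fin (G m)) :=
  Finset.univ.filter fun g => A m g ⊆ H0

/-- Layer-`m` false discovery proportion of a selected feature set. -/
noncomputable def FDP (A : (m : Fin M) → Fin (G m) → Finset (Fin N))
    (H0 : Finset (Fin N)) (S : Finset (Fin N)) (m : Fin M) : ℝ≥0∞ :=
  ((selGrp A S m ∩ nullGrp A H0 m).card : ℝ≥0∞) /
    ((max (selGrp A S m).card 1 : ℕ) : ℝ≥0∞)

end MultilayerEFilter

/-!
The filter's threshold `t̂` lies below every admissible `t`, so its selection is the largest and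
`G^(m)/t^(m) ≤ α^(m) (|S^(m)(t̂)| ∨ 1)` for each admissible `t`; taking the infimum over `t`
shows that `t̂` itself satisfies `FDPhat^(m)(t̂) ≤ α^(m)`. A selected null group `g` has
`1 ≤ t̂^(m) ≤ e_g^(m)`, which for the one-bit e-values forces `g ∈ R^(m)` and
`t̂^(m) ≤ G^(m)/d`, where `d = max(V̂^(m), α₀^(m))`. Hence, pointwise,
`FDP^(m) ≤ |R^(m) ∩ H0^(m)| (G^(m)/(t̂^(m) d)) / (|S^(m)| ∨ 1) ≤ α^(m) |R^(m) ∩ H0^(m)| / d`,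
and the e-value condition bounds the expectation of the right-hand side by `α^(m)`.
-/

theorem ENNReal.div_sInf_le {a c : ℝ≥0∞} {s : Set ℝ≥0∞} (h : ∀ x ∈ s, a / x ≤ c) :
    a / sInf s ≤ c := by
  rw [div_eq_mul_inv, ENNReal.inv_sInf, ENNReal.mul_iSup]
  refine iSup_le fun x => ?_
  rw [ENNReal.mul_iSup]
  exact iSup_le fun hx => h x hx

namespace MultilayerEFilter

variable {N M : ℕ} {G : Fin M → ℕ}

section Filter

variable (A : (m : Fin M) → Fin (G m) → Finset (Fin N)) (h : (m : Fin M) → Fin N → Fin (G m))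
  (e : (m : Fin M) → Fin (G m) → ℝ≥0∞)

theorem sel_antitone : Antitone (sel h e) := fun _ _ htt _ hj => by
  simp only [sel, Finset.mem_filter, Finset.mem_univ, true_and] at hj ⊢
  exact fun m => (htt m).trans (hj m)

theorem selGrp_mono {S S' : Finset (Fin N)} (hSS : S ⊆ S') (m : Fin M) :
    selGrp A S m ⊆ selGrp A S' m := by
  intro g hg
  simp only [selGrp, Finset.mem_filter, Finset.mem_univ, true_and] at hg ⊢
  obtain ⟨j, hjA, hjS⟩ := hg
  exact ⟨j, hjA, hSS hjS⟩

theorem filterThreshold_le {α : Fin M → ℝ} {t : Fin M → ℝ≥0∞} (ht : t ∈ admissible A h e α) :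
    filterThreshold A h e α ≤ t :=
  fun _ => sInf_le ⟨t, ht, rfl⟩

theorem one_le_filterThreshold (α : Fin M → ℝ) (m : Fin M) : 1 ≤ filterThreshold A h e α m :=
  le_sInf fun _ ⟨_, ht, hs⟩ => hs ▸ ht.1 m

theorem FDPhat_filterThreshold_le (α : Fin M → ℝ) (m : Fin M) :
    FDPhat A h e (filterThreshold A h e α) m ≤ ENNReal.ofReal (α m) := by
  refine ENNReal.div_le_of_le_mul (ENNReal.div_sInf_le ?_)
  rintro _ ⟨t, ht, rfl⟩
  have hD : ((max (selGrp A (sel h e t) m).card 1 : ℕ) : ℝ≥0∞) ≠ 0 := by simp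
  calc (G m : ℝ≥0∞) / t m
      ≤ ENNReal.ofReal (α m) * ((max (selGrp A (sel h e t) m).card 1 : ℕ) : ℝ≥0∞) :=
        (ENNReal.div_le_iff hD (ENNReal.natCast_ne_top _)).1 (ht.2 m)
    _ ≤ _ := by gcongr; exact selGrp_mono A (sel_antitone h e (filterThreshold_le A h e ht)) m

theorem le_of_mem_selGrp_sel
    (hdisj : ∀ m, ∀ g₁ g₂ : Fin (G m), g₁ ≠ g₂ → Disjoint (A m g₁) (A m g₂))
    (hmem : ∀ m j, j ∈ A m (h m j)) {t : Fin M → ℝ≥0∞} {m : Fin M} {g : Fin (G m)}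
    (hg : g ∈ selGrp A (sel h e t) m) : t m ≤ e m g := by
  simp only [selGrp, sel, Finset.mem_filter, Finset.mem_univ, true_and] at hg
  obtain ⟨j, hjA, hjS⟩ := hg
  obtain rfl : h m j = g := by
    by_contra hne
    exact Finset.disjoint_left.1 (hdisj m _ _ hne) (hmem m j) hjA
  exact hjS m

end Filter

noncomputable def oneBitEValue (R : (m : Fin M) → Finset (Fin (G m))) (d : Fin M → ℝ)
    (m : Fin M) (g : Fin (G m)) : ℝ≥0∞ :=
  ENNReal.ofReal ((G m : ℝ) * (if g ∈ R m then 1 else 0) / d m)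

theorem oneBitEValue_of_not_mem {R : (m : Fin M) → Finset (Fin (G m))} {d : Fin M → ℝ}
    {m : Fin M} {g : Fin (G m)} (hg : g ∉ R m) : oneBitEValue R d m g = 0 := by
  simp [oneBitEValue, hg]

theorem oneBitEValue_of_mem {R : (m : Fin M) → Finset (Fin (G m))} {d : Fin M → ℝ}
    {m : Fin M} {g : Fin (G m)} (hg : g ∈ R m) (hd : 0 < d m) :
    oneBitEValue R d m g = G m / ENNReal.ofReal (d m) := by
  simp [oneBitEValue, hg, ENNReal.ofReal_div_of_pos hd]

theorem FDP_output_oneBitEValue_le (A : (m : Fin M) → Fin (G m) → Finset (Fin N))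
    (h : (m : Fin M) → Fin N → Fin (G m))
    (hdisj : ∀ m, ∀ g₁ g₂ : Fin (G m), g₁ ≠ g₂ → Disjoint (A m g₁) (A m g₂))
    (hmem : ∀ m j, j ∈ A m (h m j)) (H0 : Finset (Fin N)) (α : Fin M → ℝ)
    (R : (m : Fin M) → Finset (Fin (G m))) {d : Fin M → ℝ} (m : Fin M) (hd : 0 < d m) :
    FDP A H0 (output A h (oneBitEValue R d) α) m
      ≤ ENNReal.ofReal (α m) * ENNReal.ofReal (((R m ∩ nullGrp A H0 m).card : ℝ) / d m) := by
  set e := oneBitEValue R d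
  set t := filterThreshold A h e α
  set E : ℝ≥0∞ := G m / ENNReal.ofReal (d m)
  set D : ℝ≥0∞ := ((max (selGrp A (sel h e t) m).card 1 : ℕ) : ℝ≥0∞)
  have ht : 1 ≤ t m := one_le_filterThreshold A h e α m
  have hsel : ∀ g ∈ selGrp A (sel h e t) m, g ∈ R m ∧ t m ≤ E := fun g hg => by
    have hte : t m ≤ oneBitEValue R d m g := le_of_mem_selGrp_sel A h e hdisj hmem hg
    by_cases hgR : g ∈ R m
    · rw [oneBitEValue_of_mem hgR hd] at hte
      exact ⟨hgR, hte⟩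
    · rw [oneBitEValue_of_not_mem hgR] at hte
      exact absurd (ht.trans hte) (by simp)
  have hsub : selGrp A (sel h e t) m ∩ nullGrp A H0 m ⊆ R m ∩ nullGrp A H0 m :=
    Finset.inter_subset_inter (fun g hg => (hsel g hg).1) subset_rfl
  have hcard : ((selGrp A (sel h e t) m ∩ nullGrp A H0 m).card : ℝ≥0∞)
      ≤ (R m ∩ nullGrp A H0 m).card * (E / t m) := by
    obtain hK | ⟨g, hg⟩ := (selGrp A (sel h e t) m ∩ nullGrp A H0 m).eq_empty_or_nonempty
    · simp [hK]
    have hE : E ≠ ∞ := ENNReal.div_ne_top (ENNReal.natCast_ne_top _) (ENNReal.ofReal_pos.2 hd).ne'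
    have hq : 1 ≤ E / t m := (ENNReal.le_div_iff_mul_le (Or.inl (zero_lt_one.trans_le ht).ne')
        (Or.inr hE)).2
      (by rw [one_mul]; exact (hsel g (Finset.mem_inter.1 hg).1).2)
    calc _ ≤ ((R m ∩ nullGrp A H0 m).card : ℝ≥0∞) := by exact_mod_cast Finset.card_le_card hsub
      _ ≤ _ := le_mul_of_one_le_right zero_le hq
  calc FDP A H0 (sel h e t) m ≤ (R m ∩ nullGrp A H0 m).card * (E / t m) / D :=
        ENNReal.div_le_div_right hcard D
    _ = (R m ∩ nullGrp A H0 m).card / ENNReal.ofReal (d m) * ((G m / t m) / D) := by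
        simp only [E, div_eq_mul_inv]; ring
    _ ≤ (R m ∩ nullGrp A H0 m).card / ENNReal.ofReal (d m) * ENNReal.ofReal (α m) := by
        gcongr; exact FDPhat_filterThreshold_le A h e α m
    _ = _ := by rw [ENNReal.ofReal_div_of_pos hd, ENNReal.ofReal_natCast, mul_comm]

theorem stmt9_general {N M : ℕ} {G : Fin M → ℕ}
    (A : (m : Fin M) → Fin (G m) → Finset (Fin N))
    (h : (m : Fin M) → Fin N → Fin (G m))
    (hdisj : ∀ m, ∀ g₁ g₂ : Fin (G m), g₁ ≠ g₂ → Disjoint (A m g₁) (A m g₂))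
    (hmem : ∀ m j, j ∈ A m (h m j))
    (H0 : Finset (Fin N))
    {Ω : Type*} [MeasurableSpace Ω] (P : Measure Ω)
    (α₀ α : Fin M → ℝ)
    (hα₀ : ∀ m, α₀ m ∈ Set.Ioo (0 : ℝ) 1)
    (Rej : Ω → (m : Fin M) → Finset (Fin (G m)))
    (V : Ω → Fin M → ℝ)
    (hE : ∀ m, ∫⁻ ω, ENNReal.ofReal
        (((Rej ω m ∩ nullGrp A H0 m).card : ℝ) / max (V ω m) (α₀ m)) ∂P ≤ 1) :
    ∀ m, (∫⁻ ω, FDP A H0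
        (output A h (fun m' g => ENNReal.ofReal
          ((G m' : ℝ) * (if g ∈ Rej ω m' then 1 else 0) / max (V ω m') (α₀ m'))) α)
        m ∂P) ≤ ENNReal.ofReal (α m) := by
  intro m
  calc _ ≤ ∫⁻ ω, ENNReal.ofReal (α m) *
          ENNReal.ofReal (((Rej ω m ∩ nullGrp A H0 m).card : ℝ) / max (V ω m) (α₀ m)) ∂P :=
        lintegral_mono fun ω => FDP_output_oneBitEValue_le A h hdisj hmem H0 α (Rej ω) m
          (lt_max_of_lt_right (hα₀ m).1)
    _ = ENNReal.ofReal (α m) * ∫⁻ ω, ENNReal.ofReal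
          (((Rej ω m ∩ nullGrp A H0 m).card : ℝ) / max (V ω m) (α₀ m)) ∂P :=
        lintegral_const_mul' _ _ ENNReal.ofReal_ne_top
    _ ≤ ENNReal.ofReal (α m) := mul_le_of_le_one_right zero_le (hE m)

theorem stmt9 {N M : ℕ} (hN : 1 ≤ N) (hM : 1 ≤ M) {G : Fin M → ℕ}
    (A : (m : Fin M) → Fin (G m) → Finset (Fin N))
    (h : (m : Fin M) → Fin N → Fin (G m))
    (hne : ∀ m g, (A m g).Nonempty)
    (hdisj : ∀ m, ∀ g₁ g₂ : Fin (G m), g₁ ≠ g₂ → Disjoint (A m g₁) (A m g₂))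
    (hmem : ∀ m j, j ∈ A m (h m j))
    (H0 : Finset (Fin N))
    {Ω : Type*} [MeasurableSpace Ω] (P : Measure Ω) [IsProbabilityMeasure P]
    (α₀ α : Fin M → ℝ)
    (hα₀ : ∀ m, α₀ m ∈ Set.Ioo (0 : ℝ) 1) (hα : ∀ m, α m ∈ Set.Ioo (0 : ℝ) 1)
    (Rej : Ω → (m : Fin M) → Finset (Fin (G m)))
    (V : Ω → Fin M → ℝ) (hV : ∀ ω m, 0 ≤ V ω m)
    (hmeasR : ∀ m (g : Fin (G m)), MeasurableSet {ω | g ∈ Rej ω m})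
    (hmeasV : ∀ m, Measurable fun ω => V ω m)
    (hE : ∀ m, ∫⁻ ω, ENNReal.ofReal
        (((Rej ω m ∩ nullGrp A H0 m).card : ℝ) / max (V ω m) (α₀ m)) ∂P ≤ 1) :
    ∀ m, (∫⁻ ω, FDP A H0
        (output A h (fun m' g => ENNReal.ofReal
          ((G m' : ℝ) * (if g ∈ Rej ω m' then 1 else 0) / max (V ω m') (α₀ m'))) α)
        m ∂P) ≤ ENNReal.ofReal (α m) :=
  stmt9_general A h hdisj hmem H0 P α₀ α hα₀ Rej V hE

end MultilayerEFilter
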